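/- arXiv:2407.00916 — 3 statements merged into one kernel-verified Lean document; each statement's English description precedes it below -/
import Mathlib

section
/- Let σ : ℕ → ℝ with σ_t ≥ 0 for all t ≥ 1. Then for any T ≥ 1, ∑_{t=1}^T σ_t / √(1 + ∑_{τ=1}^{t-1} σ_τ) ≤ 2·√(∑_{τ=1}^T σ_τ) + max_{1 ≤ t ≤ T} σ_t. -/
/-!
With `S_t = σ_1 + ⋯ + σ_t` and `M = max σ_t`, the potential `Φ(s) = 2√s - M/√s` satisfies
`a/√u ≤ Φ(u + a) - Φ(u)` whenever `0 ≤ a ≤ M`, so the sum telescopes to at most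
`Φ(1 + S_T) - Φ(1) ≤ 2√S_T + M`. The correction term `-M/√s` absorbs the gap between
`1 + S_{t-1}` and `1 + S_t`, which may be large when `σ_t > 1`.
-/

open Finset Real

noncomputable def sqrtPotential (M s : ℝ) : ℝ := 2 * √s - M / √s

theorem div_sqrt_le_sqrtPotential_sub {u a M : ℝ} (hu : 0 < u) (ha : 0 ≤ a) (haM : a ≤ M) :
    a / √u ≤ sqrtPotential M (u + a) - sqrtPotential M u := by
  have hx : 0 < √u := sqrt_pos.mpr hu
  have hxy : √u ≤ √(u + a) := sqrt_le_sqrt (by linarith)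
  have hy : 0 < √(u + a) := hx.trans_le hxy
  have ha_eq : a = √(u + a) ^ 2 - √u ^ 2 := by
    rw [sq_sqrt hu.le, sq_sqrt (by linarith)]; ring
  set x := √u
  set y := √(u + a)
  -- `a = 2x(y - x) + (y - x)²`, and `(y - x)² ≤ M(y - x)/y` since `y(y - x) ≤ y² - x² = a ≤ M`.
  have hgap : y * (y - x) ≤ M := by nlinarith
  have key : (y - x) * (y * (y - x) - M) ≤ 0 :=
    mul_nonpos_of_nonneg_of_nonpos (by linarith) (by linarith)
  have expand : (2 * y - M / y - (2 * x - M / x)) * x = 2 * x * (y - x) + M * (y - x) / y := by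
    field_simp; ring
  rw [sqrtPotential, sqrtPotential, div_le_iff₀ hx, expand]
  have hsq : (y - x) ^ 2 ≤ M * (y - x) / y := by rw [le_div_iff₀ hy]; linarith
  nlinarith

theorem sqrt_one_add_le_one_add_sqrt {s : ℝ} (hs : 0 ≤ s) : √(1 + s) ≤ 1 + √s := by
  rw [sqrt_le_iff]
  refine ⟨by positivity, ?_⟩
  nlinarith [sq_sqrt hs, sqrt_nonneg s]

theorem sum_div_sqrt_one_add_partial_sum_le (σ : ℕ → ℝ) (M : ℝ) (T : ℕ)
    (hσ : ∀ t ∈ Icc 1 T, 0 ≤ σ t) (hσM : ∀ t ∈ Icc 1 T, σ t ≤ M) :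
    ∑ t ∈ Icc 1 T, σ t / √(1 + ∑ τ ∈ Icc 1 (t - 1), σ τ) ≤
      sqrtPotential M (1 + ∑ τ ∈ Icc 1 T, σ τ) - sqrtPotential M 1 := by
  induction T with
  | zero => simp
  | succ T ih =>
    have hIcc : Icc 1 T ⊆ Icc 1 (T + 1) := Icc_subset_Icc_right T.le_succ
    have hlast : T + 1 ∈ Icc 1 (T + 1) := mem_Icc.mpr ⟨T.succ_pos, le_rfl⟩
    have hS : 0 ≤ ∑ τ ∈ Icc 1 T, σ τ := sum_nonneg fun τ hτ => hσ τ (hIcc hτ)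
    rw [sum_Icc_succ_top T.succ_pos, sum_Icc_succ_top T.succ_pos, Nat.add_sub_cancel, ← add_assoc]
    have step := div_sqrt_le_sqrtPotential_sub (by linarith : (0 : ℝ) < 1 + ∑ τ ∈ Icc 1 T, σ τ)
      (hσ _ hlast) (hσM _ hlast)
    linarith [ih (fun t ht => hσ t (hIcc ht)) (fun t ht => hσM t (hIcc ht))]

theorem sqrtPotential_one_add_sub_le {M s : ℝ} (hM : 0 ≤ M) (hs : 0 ≤ s) :
    sqrtPotential M (1 + s) - sqrtPotential M 1 ≤ 2 * √s + M := by
  have h := sqrt_one_add_le_one_add_sqrt hs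
  have : 0 ≤ M / √(1 + s) := by positivity
  simp only [sqrtPotential, sqrt_one, div_one]
  linarith

theorem stmt_3 (σ : ℕ → ℝ) (hσ : ∀ t, 1 ≤ t → 0 ≤ σ t) (T : ℕ) (hT : 1 ≤ T) :
    ∑ t ∈ Finset.Icc 1 T, σ t / Real.sqrt (1 + ∑ τ ∈ Finset.Icc 1 (t - 1), σ τ) ≤
      2 * Real.sqrt (∑ τ ∈ Finset.Icc 1 T, σ τ) +
        (Finset.Icc 1 T).sup' (Finset.nonempty_Icc.mpr hT) σ := by
  set M := (Icc 1 T).sup' (nonempty_Icc.mpr hT) σ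
  have hσ' : ∀ t ∈ Icc 1 T, 0 ≤ σ t := fun t ht => hσ t (mem_Icc.mp ht).1
  have hσM : ∀ t ∈ Icc 1 T, σ t ≤ M := fun t ht => le_sup' σ ht
  have h1 : 1 ∈ Icc 1 T := mem_Icc.mpr ⟨le_rfl, hT⟩
  have hM : 0 ≤ M := (hσ' 1 h1).trans (hσM 1 h1)
  exact (sum_div_sqrt_one_add_partial_sum_le σ M T hσ' hσM).trans
    (sqrtPotential_one_add_sub_le hM (sum_nonneg hσ'))
end

section
/- Let K ≥ 1, B > 0, U > 0 and let a ∈ ℝ^K satisfy ∑_{i=1}^K a_i² ≤ U². Then ∑_{i=1}^K ln(1 + exp(-|a_i|)) ≥ K·ln(1 + exp(-U/√K)). -/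
/-! The function `x ↦ log (1 + exp (-x))` is convex and decreasing. By Jensen's inequality the sum
is at least `K` times its value at the mean of the `|a i|`, and by Cauchy–Schwarz that mean is at
most `U / √K`. -/

open Real Finset

lemma hasDerivAt_log_one_add_exp_neg (x : ℝ) :
    HasDerivAt (fun x => log (1 + exp (-x))) (-(1 + exp x)⁻¹) x := by
  convert (((hasDerivAt_neg x).exp).const_add 1).log (by positivity) using 1
  field_simp
  rw [add_mul, ← exp_add]
  simp [add_comm]

lemma convexOn_log_one_add_exp_neg : ConvexOn ℝ Set.univ fun x => log (1 + exp (-x)) := by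
  refine Monotone.convexOn_univ_of_deriv
    (fun x => (hasDerivAt_log_one_add_exp_neg x).differentiableAt) ?_
  rw [funext fun x => (hasDerivAt_log_one_add_exp_neg x).deriv]
  intro x y hxy
  simp only [neg_le_neg_iff]
  gcongr

lemma ConvexOn.card_mul_map_sum_div_card_le {ι : Type*} [Fintype ι] {f : ℝ → ℝ}
    (hf : ConvexOn ℝ Set.univ f) (x : ι → ℝ) :
    Fintype.card ι * f ((∑ i, x i) / Fintype.card ι) ≤ ∑ i, f (x i) := by
  rcases isEmpty_or_nonempty ι with hι | hι
  · simp
  have hcard : (0 : ℝ) < Fintype.card ι := by exact_mod_cast Fintype.card_pos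
  have h := hf.map_sum_le (t := univ) (w := fun _ => (Fintype.card ι : ℝ)⁻¹) (p := x)
    (fun _ _ => by positivity) (by simp [hcard.ne']) (fun _ _ => Set.mem_univ _)
  simp only [smul_eq_mul, inv_mul_eq_div, ← sum_div] at h
  exact (le_div_iff₀' hcard).1 h

lemma sum_abs_div_card_le {ι : Type*} [Fintype ι] {x : ι → ℝ} {U : ℝ} (hU : 0 ≤ U)
    (hx : ∑ i, x i ^ 2 ≤ U ^ 2) :
    (∑ i, |x i|) / Fintype.card ι ≤ U / √(Fintype.card ι) := by
  have hsq : (∑ i, |x i|) ^ 2 ≤ (√(Fintype.card ι) * U) ^ 2 := by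
    calc (∑ i, |x i|) ^ 2 ≤ Fintype.card ι * ∑ i, |x i| ^ 2 := sq_sum_le_card_mul_sum_sq
      _ ≤ Fintype.card ι * U ^ 2 := by simp only [sq_abs]; gcongr
      _ = (√(Fintype.card ι) * U) ^ 2 := by rw [mul_pow, sq_sqrt (Nat.cast_nonneg _)]
  have hsum := (abs_le_of_sq_le_sq' hsq (by positivity)).2
  calc (∑ i, |x i|) / Fintype.card ι ≤ √(Fintype.card ι) * U / Fintype.card ι := by gcongr
    _ = U / √(Fintype.card ι) := by rw [mul_div_right_comm, sqrt_div_self, inv_mul_eq_div]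

theorem stmt_11_general (K : ℕ) (U : ℝ) (hU : 0 < U)
    (a : Fin K → ℝ) (ha : ∑ i, (a i) ^ 2 ≤ U ^ 2) :
    (K : ℝ) * Real.log (1 + Real.exp (-(U / Real.sqrt K))) ≤
      ∑ i, Real.log (1 + Real.exp (-|a i|)) := by
  have hmean : (∑ i, |a i|) / K ≤ U / √K := by
    simpa using sum_abs_div_card_le hU.le ha
  calc (K : ℝ) * log (1 + exp (-(U / √K)))
      ≤ K * log (1 + exp (-((∑ i, |a i|) / K))) := by gcongr
    _ ≤ ∑ i, log (1 + exp (-|a i|)) := by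
        simpa using convexOn_log_one_add_exp_neg.card_mul_map_sum_div_card_le (fun i => |a i|)

theorem stmt_11 (K : ℕ) (hK : 1 ≤ K) (B U : ℝ) (hB : 0 < B) (hU : 0 < U)
    (a : Fin K → ℝ) (ha : ∑ i, (a i) ^ 2 ≤ U ^ 2) :
    (K : ℝ) * Real.log (1 + Real.exp (-(U / Real.sqrt K))) ≤
      ∑ i, Real.log (1 + Real.exp (-|a i|)) :=
  stmt_11_general K U hU a ha
end

section
/- Let p̃ ∈ ℝ^K be defined by p̃_j = exp(-η·C_j)/∑_{i=1}^K exp(-η·C_i) for η > 0 and C ∈ ℝ^K, and define Γ(η) = (1/η)·ln((1/K)·∑_{j=1}^K exp(-η·C_j)). Then the derivative of Γ with respect to η equals (1/η²)·KL(p̃, u) ≥ 0, where u is the uniform distribution on [K] and KL(p̃, u) = ∑_j p̃_j·ln(K·p̃_j). -/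
/-!
Write `S(η) = ∑ⱼ exp (-η Cⱼ)` and `p = exp (-η C) / S(η)` for the Gibbs weights. Then
`Γ(η) = (log S(η) - log K) / η` and `(log S)' = -∑ⱼ pⱼ Cⱼ`, so
`η² Γ'(η) = log K - log S - η ∑ⱼ pⱼ Cⱼ`, which is `∑ⱼ pⱼ log (K pⱼ)` because
`log pⱼ = -η Cⱼ - log S`. This is `KL(p, u) = (1/K) ∑ⱼ klFun (K pⱼ) ≥ 0`.
-/

open Real

section GibbsWeights

variable {ι : Type*} [Fintype ι]

noncomputable def gibbsWeights (η : ℝ) (C : ι → ℝ) (j : ι) : ℝ :=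
  exp (-η * C j) / ∑ i, exp (-η * C i)

lemma sum_exp_neg_mul_pos [Nonempty ι] (η : ℝ) (C : ι → ℝ) : 0 < ∑ i, exp (-η * C i) :=
  Finset.sum_pos (fun _ _ => exp_pos _) Finset.univ_nonempty

lemma sum_gibbsWeights [Nonempty ι] (η : ℝ) (C : ι → ℝ) : ∑ j, gibbsWeights η C j = 1 := by
  simp only [gibbsWeights, ← Finset.sum_div]
  exact div_self (sum_exp_neg_mul_pos η C).ne'

lemma log_gibbsWeights [Nonempty ι] (η : ℝ) (C : ι → ℝ) (j : ι) :
    log (gibbsWeights η C j) = -η * C j - log (∑ i, exp (-η * C i)) := by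
  rw [gibbsWeights, log_div (exp_pos _).ne' (sum_exp_neg_mul_pos η C).ne', log_exp]

lemma gibbsWeights_pos [Nonempty ι] (η : ℝ) (C : ι → ℝ) (j : ι) : 0 < gibbsWeights η C j :=
  div_pos (exp_pos _) (sum_exp_neg_mul_pos η C)

lemma hasDerivAt_log_sum_exp_neg_mul [Nonempty ι] (C : ι → ℝ) (η : ℝ) :
    HasDerivAt (fun e => log (∑ j, exp (-e * C j))) (-∑ j, gibbsWeights η C j * C j) η := by
  have hS : HasDerivAt (fun e => ∑ j, exp (-e * C j)) (∑ j, exp (-η * C j) * -C j) η :=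
    HasDerivAt.fun_sum fun j _ => (((hasDerivAt_id η).neg.mul_const (C j)).congr_deriv
      (by simp)).exp
  convert hS.log (sum_exp_neg_mul_pos η C).ne' using 1
  simp only [gibbsWeights, Finset.sum_div, ← Finset.sum_neg_distrib]
  exact Finset.sum_congr rfl fun j _ => by ring

lemma sum_gibbsWeights_mul_log_const_mul [Nonempty ι] (η : ℝ) (C : ι → ℝ) {c : ℝ}
    (hc : 0 < c) :
    ∑ j, gibbsWeights η C j * log (c * gibbsWeights η C j)
      = log c - log (∑ i, exp (-η * C i)) - η * ∑ j, gibbsWeights η C j * C j := by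
  simp only [log_mul hc.ne' (gibbsWeights_pos η C _).ne', log_gibbsWeights, mul_add, mul_sub,
    Finset.sum_add_distrib, Finset.sum_sub_distrib, ← Finset.sum_mul, sum_gibbsWeights, neg_mul,
    mul_neg, Finset.sum_neg_distrib, mul_left_comm (gibbsWeights η C _) η, ← Finset.mul_sum]
  ring

end GibbsWeights

lemma sum_mul_log_card_mul_nonneg {ι : Type*} [Fintype ι] {p : ι → ℝ} (hp : ∀ i, 0 ≤ p i)
    (hsum : ∑ i, p i = 1) : 0 ≤ ∑ i, p i * log (Fintype.card ι * p i) := by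
  have hn : (0 : ℝ) < Fintype.card ι := by
    rcases isEmpty_or_nonempty ι with _ | _
    · simp at hsum
    · exact_mod_cast Fintype.card_pos
  have hkl : ∑ i, InformationTheory.klFun (Fintype.card ι * p i)
      = Fintype.card ι * ∑ i, p i * log (Fintype.card ι * p i) := by
    simp only [InformationTheory.klFun_apply, Finset.sum_add_distrib, Finset.sum_sub_distrib,
      Finset.sum_const, Finset.card_univ, nsmul_eq_mul, ← Finset.mul_sum, hsum, mul_assoc]
    ring
  refine nonneg_of_mul_nonneg_right (hkl ▸ Finset.sum_nonneg fun i _ => ?_) hn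
  exact InformationTheory.klFun_nonneg (mul_nonneg hn.le (hp i))

theorem stmt_14 (K : ℕ) (hK : 1 ≤ K) (C : Fin K → ℝ) (η : ℝ) (hη : 0 < η) :
    HasDerivAt (fun e : ℝ => (1 / e) * Real.log ((1 / K) * ∑ j, Real.exp (-e * C j)))
      ((1 / η ^ 2) * ∑ j,
        (Real.exp (-η * C j) / ∑ i, Real.exp (-η * C i)) *
          Real.log (K * (Real.exp (-η * C j) / ∑ i, Real.exp (-η * C i)))) η ∧
    0 ≤ (1 / η ^ 2) * ∑ j,
        (Real.exp (-η * C j) / ∑ i, Real.exp (-η * C i)) *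
          Real.log (K * (Real.exp (-η * C j) / ∑ i, Real.exp (-η * C i))) := by
  have : Nonempty (Fin K) := ⟨⟨0, hK⟩⟩
  have hKpos : (0 : ℝ) < K := by exact_mod_cast hK
  have hΓ : (fun e : ℝ => (1 / e) * log ((1 / K) * ∑ j, exp (-e * C j)))
      = fun e => (1 / e) * (log (∑ j, exp (-e * C j)) - log K) := by
    funext e
    rw [log_mul (by positivity) (sum_exp_neg_mul_pos e C).ne', one_div (K : ℝ), log_inv]
    ring
  have hKL := sum_gibbsWeights_mul_log_const_mul η C hKpos
  have hnonneg := sum_mul_log_card_mul_nonneg (fun j => (gibbsWeights_pos η C j).le)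
    (sum_gibbsWeights η C)
  rw [Fintype.card_fin] at hnonneg
  refine ⟨?_, mul_nonneg (by positivity) hnonneg⟩
  change HasDerivAt _ ((1 / η ^ 2) * ∑ j, gibbsWeights η C j * log (K * gibbsWeights η C j)) η
  have hinv : HasDerivAt (fun e : ℝ => 1 / e) (-(1 / η ^ 2)) η := by
    simpa [one_div] using hasDerivAt_inv hη.ne'
  rw [hΓ, hKL]
  refine (hinv.fun_mul ((hasDerivAt_log_sum_exp_neg_mul C η).sub_const (log K))).congr_deriv ?_
  rw [show 1 / η = η * (1 / η ^ 2) by field_simp]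
  ring
end
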